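/- Let K ⊂ R^d be a convex body (compact convex set with nonempty interior) and r > 0. Then λ_d(∂K + r B_d) ≤ 2 (λ_d(K + r B_d) − λ_d(K)), where B_d is the closed unit ball and ∂K the boundary of K. -/

import Mathlib

open MeasureTheory Metric Pointwise
open scoped RealInnerProductSpace

/-!
Let `P` be the metric projection onto `K` and `g x = 2 P x - x` the reflection of `x` through
its projection; `g` is `1`-Lipschitz because `P` is firmly nonexpansive. Let
`S = (K + rB) \ int K`, whose volume is `λ(K + rB) - λ(K)` since `∂K` is null. A point of
`∂K + rB` outside `int K` lies in `S`. A point `y ∈ int K` within `r` of `∂K` has a nearest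
point `p` of `ℝ^d \ int K`; the ball around `y` of radius `|p - y|` lies in `K`, so the
supporting hyperplane of `K` at `p` is orthogonal to `p - y`, whence `P (2p - y) = p` and
`y = g (2p - y)` with `2p - y ∈ S`. Thus `∂K + rB ⊆ S ∪ g(S)`, which has volume at most `2 λ(S)`.
-/

theorem LipschitzWith.addHaar_image_le {E : Type*} [NormedAddCommGroup E] [NormedSpace ℝ E]
    [FiniteDimensional ℝ E] [MeasurableSpace E] [BorelSpace E] (μ : Measure E)
    [μ.IsAddHaarMeasure] {g : E → E} (hg : LipschitzWith 1 g) (s : Set E) :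
    μ (g '' s) ≤ μ s := by
  rw [Measure.isAddLeftInvariant_eq_smul μ μH[Module.finrank ℝ E]]
  simpa using mul_le_mul_right (hg.hausdorffMeasure_image_le (Nat.cast_nonneg _) s) _

theorem Convex.addHaar_diff_interior {E : Type*} [NormedAddCommGroup E] [NormedSpace ℝ E]
    [FiniteDimensional ℝ E] [MeasurableSpace E] [BorelSpace E] (μ : Measure E)
    [μ.IsAddHaarMeasure] {K L : Set E} (hK : Convex ℝ K) (hKL : K ⊆ L) (hfin : μ K ≠ ⊤) :
    μ (L \ interior K) = μ L - μ K := by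
  have hint := measure_interior_of_null_frontier (hK.addHaar_frontier μ)
  rw [measure_sdiff (interior_subset.trans hKL) isOpen_interior.measurableSet.nullMeasurableSet
    (hint ▸ hfin), hint]

section InnerProductSpace

variable {F : Type*} [NormedAddCommGroup F] [InnerProductSpace ℝ F]

theorem exists_proj_convex {K : Set F} (hne : K.Nonempty) (hc : IsComplete K)
    (hK : Convex ℝ K) : ∃ P : F → F, ∀ x, P x ∈ K ∧ ∀ w ∈ K, ⟪x - P x, w - P x⟫ ≤ 0 := by
  choose P hPK hPmin using exists_norm_eq_iInf_of_complete_convex hne hc hK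
  exact ⟨P, fun x => ⟨hPK x, (norm_eq_iInf_iff_real_inner_le_zero hK (hPK x)).1 (hPmin x)⟩⟩

theorem eq_of_real_inner_le_zero {x p p' : F} (h : ⟪x - p, p' - p⟫ ≤ 0)
    (h' : ⟪x - p', p - p'⟫ ≤ 0) : p = p' := by
  have hsq : ‖p' - p‖ ^ 2 = ⟪x - p, p' - p⟫ + ⟪x - p', p - p'⟫ := by
    rw [← real_inner_self_eq_norm_sq, ← neg_sub p' p, inner_neg_right, ← sub_eq_add_neg,
      ← inner_sub_left, sub_sub_sub_cancel_left]
  have : ‖p' - p‖ = 0 := by nlinarith [norm_nonneg (p' - p)]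
  exact (sub_eq_zero.1 (norm_eq_zero.1 this)).symm

theorem norm_sub_le_norm_add_of_real_inner_nonneg {u v : F} (h : 0 ≤ ⟪u, v⟫) :
    ‖u - v‖ ≤ ‖u + v‖ := by
  have := norm_sub_sq_real u v
  have := norm_add_sq_real u v
  nlinarith [norm_nonneg (u - v), norm_nonneg (u + v)]

theorem lipschitzWith_one_reflection {P : F → F} (hP : ∀ x y, ⟪x - P x, P y - P x⟫ ≤ 0) :
    LipschitzWith 1 fun x => (2 : ℝ) • P x - x := by
  refine LipschitzWith.of_dist_le_mul fun x y => ?_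
  rw [NNReal.coe_one, one_mul, dist_eq_norm, dist_eq_norm]
  have hxy := hP x y
  have hyx := hP y x
  have h : 0 ≤ ⟪P x - P y, (x - P x) - (y - P y)⟫ := by
    rw [← neg_sub (P x) (P y), inner_neg_right] at hxy
    rw [inner_sub_right, real_inner_comm, real_inner_comm (y - P y)]
    linarith
  have hreflect : (2 : ℝ) • P x - x - ((2 : ℝ) • P y - y) =
      (P x - P y) - ((x - P x) - (y - P y)) := by module
  have hdiff : x - y = (P x - P y) + ((x - P x) - (y - P y)) := by abel
  rw [hreflect, hdiff]
  exact norm_sub_le_norm_add_of_real_inner_nonneg h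

theorem dist_le_norm_of_ball_subset {K : Set F} (hK : Convex ℝ K) {y p w : F}
    (hball : ball y (dist y p) ⊆ K) (hp : p ∉ interior K) (hw : w ∈ K) :
    dist y p ≤ ‖(2 : ℝ) • p - y - w‖ := by
  set s := dist y p
  -- otherwise `p` lies in the ball `(ball y s + w) / 2`, which is contained in `K`
  by_contra! hlt
  set c : F := (2 : ℝ)⁻¹ • (y + w)
  have hcK : ball c (s / 2) ⊆ K := by
    intro m hm
    have hm' : (2 : ℝ) • m - w ∈ ball y s := by
      rw [mem_ball, dist_eq_norm] at hm ⊢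
      have : (2 : ℝ) • m - w - y = (2 : ℝ) • (m - c) := by module
      rw [this, norm_smul, Real.norm_two]
      linarith
    have : m = (2 : ℝ)⁻¹ • ((2 : ℝ) • m - w) + (2 : ℝ)⁻¹ • w := by module
    rw [this]
    exact hK (hball hm') hw (by norm_num) (by norm_num) (by norm_num)
  have hpc : p ∈ ball c (s / 2) := by
    rw [mem_ball, dist_eq_norm]
    have : p - c = (2 : ℝ)⁻¹ • ((2 : ℝ) • p - y - w) := by module
    rw [this, norm_smul, norm_inv, Real.norm_two]
    linarith
  exact hp (interior_maximal hcK isOpen_ball hpc)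

theorem real_inner_le_zero_of_ball_subset {K : Set F} (hK : Convex ℝ K) {y p : F}
    (hball : ball y (dist y p) ⊆ K) (hp : p ∉ interior K) (hpK : p ∈ K) :
    ∀ w ∈ K, ⟪p - y, w - p⟫ ≤ 0 := by
  have : Nonempty K := ⟨⟨p, hpK⟩⟩
  have hpy : (2 : ℝ) • p - y - p = p - y := by module
  have hmin : ‖(2 : ℝ) • p - y - p‖ = ⨅ w : K, ‖(2 : ℝ) • p - y - w‖ := by
    refine le_antisymm (le_ciInf fun w => ?_) (ciInf_le ⟨0, ?_⟩ (⟨p, hpK⟩ : K))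
    · rw [hpy, ← dist_eq_norm, dist_comm]
      exact dist_le_norm_of_ball_subset hK hball hp w.2
    · rintro _ ⟨w, rfl⟩; exact norm_nonneg _
  have := (norm_eq_iInf_iff_real_inner_le_zero hK hpK).1 hmin
  rwa [hpy] at this

theorem exists_mem_frontier_ball_subset [ProperSpace F] {K : Set F} (hKc : IsClosed K) {y f : F}
    (hy : y ∈ interior K) (hf : f ∈ frontier K) :
    ∃ p ∈ frontier K, dist y p ≤ dist y f ∧ ball y (dist y p) ⊆ K := by
  have hf' : f ∈ closure Kᶜ := by rw [closure_compl]; exact hf.2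
  have hne : (Kᶜ).Nonempty := closure_nonempty_iff.1 ⟨f, hf'⟩
  obtain ⟨p, hp, hyp⟩ := exists_mem_closure_infDist_eq_dist hne y
  rw [closure_compl] at hp
  have hpos : 0 < dist y p := by
    rw [← hyp, ← infDist_pos_iff_notMem_closure hne, closure_compl, Set.notMem_compl_iff]
    exact hy
  have hball : ball y (dist y p) ⊆ K := hyp ▸ ball_infDist_compl_subset
  refine ⟨p, ⟨subset_closure ?_, hp⟩, ?_, hball⟩
  · refine closure_minimal hball hKc ?_
    rw [closure_ball y hpos.ne']
    exact mem_closedBall'.2 le_rfl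
  · rw [← hyp, ← infDist_closure]
    exact infDist_le_dist_of_mem hf'

theorem exists_reflection_eq_of_mem_interior [ProperSpace F] {K : Set F} (hKc : IsClosed K)
    (hK : Convex ℝ K) {P : F → F} (hP : ∀ x, P x ∈ K ∧ ∀ w ∈ K, ⟪x - P x, w - P x⟫ ≤ 0)
    {y f : F} (hy : y ∈ interior K) (hf : f ∈ frontier K) :
    ∃ q ∈ K + closedBall 0 (dist y f), q ∉ interior K ∧ (2 : ℝ) • P q - q = y := by
  obtain ⟨p, hpF, hpf, hball⟩ := exists_mem_frontier_ball_subset hKc hy hf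
  have hpK := hKc.frontier_subset hpF
  have hsupp := real_inner_le_zero_of_ball_subset hK hball hpF.2 hpK
  set q : F := (2 : ℝ) • p - y
  have hqp : q - p = p - y := by module
  have hPq : p = P q :=
    eq_of_real_inner_le_zero (by rw [hqp]; exact hsupp _ (hP q).1) ((hP q).2 p hpK)
  refine ⟨q, ⟨p, hpK, p - y, ?_, by module⟩, fun hq => ?_, by rw [← hPq]; module⟩
  · rwa [mem_closedBall_zero_iff, ← dist_eq_norm, dist_comm]
  · have hpy := hsupp q (interior_subset hq)
    rw [hqp, real_inner_self_eq_norm_sq] at hpy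
    have : p = y := sub_eq_zero.1 (norm_eq_zero.1 (by nlinarith [norm_nonneg (p - y)]))
    exact hpF.2 (this ▸ hy)

theorem frontier_add_closedBall_subset [ProperSpace F] {K : Set F} (hKc : IsClosed K)
    (hK : Convex ℝ K) {P : F → F} (hP : ∀ x, P x ∈ K ∧ ∀ w ∈ K, ⟪x - P x, w - P x⟫ ≤ 0)
    (r : ℝ) :
    frontier K + closedBall 0 r ⊆ (K + closedBall 0 r) \ interior K ∪
      (fun x => (2 : ℝ) • P x - x) '' ((K + closedBall 0 r) \ interior K) := by
  rintro _ ⟨f, hf, b, hb, rfl⟩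
  by_cases hy : f + b ∈ interior K
  · obtain ⟨q, hq, hqi, hgq⟩ := exists_reflection_eq_of_mem_interior hKc hK hP hy hf
    have hdist : dist (f + b) f ≤ r := by
      rwa [dist_eq_norm, add_sub_cancel_left, ← mem_closedBall_zero_iff]
    exact Or.inr ⟨q, ⟨Set.add_subset_add_left (closedBall_subset_closedBall hdist) hq, hqi⟩, hgq⟩
  · exact Or.inl ⟨Set.add_mem_add (hKc.frontier_subset hf) hb, hy⟩

end InnerProductSpace

/-- For a convex body `K ⊆ ℝ^d` and `r > 0`,
`λ_d(∂K + rB_d) ≤ 2 (λ_d(K + rB_d) − λ_d(K))`. -/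
theorem stmt_8 (d : ℕ) (K : Set (EuclideanSpace ℝ (Fin d)))
    (hK : IsCompact K) (hconv : Convex ℝ K) (hint : (interior K).Nonempty)
    (r : ℝ) (hr : 0 < r) :
    volume (frontier K + Metric.closedBall (0 : EuclideanSpace ℝ (Fin d)) r) ≤
      2 * (volume (K + Metric.closedBall (0 : EuclideanSpace ℝ (Fin d)) r) - volume K) := by
  obtain ⟨P, hP⟩ := exists_proj_convex (hint.mono interior_subset) hK.isComplete hconv
  set S := (K + closedBall (0 : EuclideanSpace ℝ (Fin d)) r) \ interior K
  have hKS : K ⊆ K + closedBall 0 r := Set.subset_add_left K (mem_closedBall_self hr.le)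
  have hg : LipschitzWith 1 fun x => (2 : ℝ) • P x - x :=
    lipschitzWith_one_reflection fun x y => (hP x).2 (P y) (hP y).1
  calc volume (frontier K + closedBall 0 r)
      ≤ volume (S ∪ (fun x => (2 : ℝ) • P x - x) '' S) :=
        measure_mono (frontier_add_closedBall_subset hK.isClosed hconv hP r)
    _ ≤ volume S + volume S :=
        (measure_union_le _ _).trans (add_le_add_right (hg.addHaar_image_le volume S) _)
    _ = 2 * (volume (K + closedBall 0 r) - volume K) := by
        rw [← two_mul, hconv.addHaar_diff_interior volume hKS hK.measure_lt_top.ne]
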